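/- Let V and W be real Banach spaces, let n ≥ 1, and let f : W → L(V,W) be (n+1)-times Fréchet differentiable with all derivatives of order ≤ n+1 bounded on every bounded set. For β ≥ 1 define Ψ_β : W × W → L(V,W) by Ψ_β(y,z) := β (f(y) − f(y − β^{−1} z)). Then: (i) for every R > 0 and every (y,z) with ‖y‖ + ‖z‖ ≤ R, ‖Ψ_β(y,z)‖ ≤ (1 + R) M(f;1,R); (ii) for every k with 1 ≤ k ≤ n there exists a constant c_k > 0, independent of β ≥ 1 and of R > 0, such that ‖D^k Ψ_β(y,z)‖ ≤ c_k (1 + R) M(f;k+1,R) whenever ‖y‖ + ‖z‖ ≤ R, where D^k denotes the k-th Fréchet derivative of Ψ_β on the Banach space W × W (with norm ‖(y,z)‖ = ‖y‖ + ‖z‖). -/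

import Mathlib

/-!
Write `Ψ_β(x) = β (f(P x) − f(L x))` with `P (y, z) = y`, `Q (y, z) = z` and `L = P − β⁻¹ Q`.
For `β ≥ 1` the maps `P`, `Q`, `L` have norm at most `1` on the `L¹` product, so `P x` and `L x`
stay in the ball of radius `R`, and the mean value inequality gives
`‖Ψ_β(x)‖ ≤ ‖z‖ sup ‖Df‖ ≤ R M(f;1,R)`. Because `L = P − β⁻¹ Q`, the chain rule gives
`DΨ_β(x) = Ψ_β[Df](x) ∘ P + Df(L x) ∘ Q`: the same construction applied to `Df`, plus a term in
which the factor `β` has cancelled. Induction on `k` then yields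
`‖D^k Ψ_β(x)‖ ≤ (R + k) M(f;k+1,R)`, uniformly in `β ≥ 1`.
-/

universe u v

/-- `M(f;k,R) = max_{0 ≤ j ≤ k} sup{‖D^j f(x)‖ : ‖x‖ ≤ R}`. -/
noncomputable def Mbound {W : Type u} {F : Type v}
    [NormedAddCommGroup W] [NormedSpace ℝ W] [NormedAddCommGroup F] [NormedSpace ℝ F]
    (f : W → F) (k : ℕ) (R : ℝ) : ℝ :=
  sSup {a : ℝ | ∃ j ≤ k, ∃ x : W, ‖x‖ ≤ R ∧ a = ‖iteratedFDeriv ℝ j f x‖}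

/-- `Ψ_β : W × W → L(V,W)`, `Ψ_β(y,z) = β (f(y) − f(y − β⁻¹ z))`, viewed as a map on
`W × W` with the norm `‖(y,z)‖ = ‖y‖ + ‖z‖` (the `L¹` product norm). -/
noncomputable def Psi {V : Type u} {W : Type v}
    [NormedAddCommGroup V] [NormedSpace ℝ V] [NormedAddCommGroup W] [NormedSpace ℝ W]
    (f : W → V →L[ℝ] W) (β : ℝ) (x : WithLp 1 (W × W)) : V →L[ℝ] W :=
  β • (f (WithLp.equiv 1 (W × W) x).1
    - f ((WithLp.equiv 1 (W × W) x).1 - β⁻¹ • (WithLp.equiv 1 (W × W) x).2))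

open ContinuousLinearMap

section DiffQuotient

variable {X : Type*} [NormedAddCommGroup X] [NormedSpace ℝ X]
variable {W : Type v} [NormedAddCommGroup W] [NormedSpace ℝ W]
variable {E : Type*} [NormedAddCommGroup E] [NormedSpace ℝ E]

noncomputable def diffQuotient (g : W → E) (P Q : X →L[ℝ] W) (β : ℝ) (x : X) : E :=
  β • (g (P x) - g ((P - β⁻¹ • Q) x))

lemma norm_iteratedFDeriv_comp_right_le {n : WithTop ℕ∞} {f : W → E} (hf : ContDiff ℝ n f)
    (L : X →L[ℝ] W) (x : X) {i : ℕ} (hi : i ≤ n) :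
    ‖iteratedFDeriv ℝ i (f ∘ L) x‖ ≤ ‖iteratedFDeriv ℝ i f (L x)‖ * ‖L‖ ^ i := by
  rw [L.iteratedFDeriv_comp_right hf x hi]
  simpa using (iteratedFDeriv ℝ i f (L x)).norm_compContinuousLinearMap_le fun _ => L

lemma norm_flip_compL_apply_le (P : X →L[ℝ] W) : ‖(compL ℝ X W E).flip P‖ ≤ ‖P‖ :=
  (le_of_opNorm_le _ ((opNorm_flip _).trans_le (norm_compL_le ℝ X W E)) P).trans_eq (one_mul _)

lemma fderiv_diffQuotient {g : W → E} (hg : Differentiable ℝ g) (P Q : X →L[ℝ] W) {β : ℝ}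
    (hβ : β ≠ 0) :
    fderiv ℝ (diffQuotient g P Q β) =
      (compL ℝ X W E).flip P ∘ diffQuotient (fderiv ℝ g) P Q β
        + (compL ℝ X W E).flip Q ∘ fderiv ℝ g ∘ (P - β⁻¹ • Q) := by
  funext x
  set L := P - β⁻¹ • Q
  have hP := (hg (P x)).hasFDerivAt.comp x P.hasFDerivAt
  have hL := (hg (L x)).hasFDerivAt.comp x L.hasFDerivAt
  have hΦ : HasFDerivAt (diffQuotient g P Q β)
      (β • ((fderiv ℝ g (P x)).comp P - (fderiv ℝ g (L x)).comp L)) x :=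
    (hP.sub hL).const_smul β
  rw [hΦ.fderiv]
  ext v
  simp only [diffQuotient, L, Pi.add_apply, Function.comp_apply, add_apply, smul_apply,
    comp_apply, sub_apply, flip_apply, compL_apply, map_sub, map_smul, smul_sub, smul_smul,
    mul_inv_cancel₀ hβ, one_smul]
  abel

lemma norm_diffQuotient_le {g : W → E} (hg : Differentiable ℝ g) {P Q : X →L[ℝ] W} {β : ℝ}
    (hβ : 0 < β) (hP : ‖P‖ ≤ 1) (hQ : ‖Q‖ ≤ 1) (hL : ‖P - β⁻¹ • Q‖ ≤ 1) {R B : ℝ}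
    (hB : ∀ w : W, ‖w‖ ≤ R → ‖fderiv ℝ g w‖ ≤ B) {x : X} (hx : ‖x‖ ≤ R) :
    ‖diffQuotient g P Q β x‖ ≤ R * B := by
  have hball : ∀ A : X →L[ℝ] W, ‖A‖ ≤ 1 → A x ∈ Metric.closedBall (0 : W) R := fun A hA =>
    mem_closedBall_zero_iff.2 ((A.le_of_opNorm_le hA x).trans (by linarith))
  have hB0 : 0 ≤ B := (norm_nonneg _).trans (hB 0 (by simpa using (norm_nonneg x).trans hx))
  have hmvt := (convex_closedBall (0 : W) R).norm_image_sub_le_of_norm_fderiv_le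
    (fun w _ => hg w) (fun w hw => hB w (mem_closedBall_zero_iff.1 hw)) (hball _ hL) (hball _ hP)
  have hstep : P x - (P - β⁻¹ • Q) x = β⁻¹ • Q x := by simp
  calc ‖diffQuotient g P Q β x‖ = β * ‖g (P x) - g ((P - β⁻¹ • Q) x)‖ := by
        rw [diffQuotient, norm_smul, Real.norm_of_nonneg hβ.le]
    _ ≤ β * (B * (β⁻¹ * ‖Q x‖)) := by
        rw [hstep, norm_smul, Real.norm_of_nonneg (inv_nonneg.2 hβ.le)] at hmvt
        gcongr
    _ = B * ‖Q x‖ := by field_simp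
    _ ≤ R * B := by
        rw [mul_comm R]
        exact mul_le_mul_of_nonneg_left ((Q.le_of_opNorm_le hQ x).trans (by linarith)) hB0

end DiffQuotient

universe w

section DiffQuotientBound

variable {X : Type*} [NormedAddCommGroup X] [NormedSpace ℝ X]
variable {W : Type v} [NormedAddCommGroup W] [NormedSpace ℝ W]

/-- `E` lives in a universe containing `W →L[ℝ] E`, so that the induction can pass from `g` to
`fderiv ℝ g`. -/
theorem norm_iteratedFDeriv_diffQuotient_le (k : ℕ) {E : Type max v w} [NormedAddCommGroup E]
    [NormedSpace ℝ E] {g : W → E} (hg : ContDiff ℝ (k + 1 : ℕ) g) {P Q : X →L[ℝ] W} {β : ℝ}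
    (hβ : 0 < β) (hP : ‖P‖ ≤ 1) (hQ : ‖Q‖ ≤ 1) (hL : ‖P - β⁻¹ • Q‖ ≤ 1) {R B : ℝ}
    (hB : ∀ j, 1 ≤ j → j ≤ k + 1 → ∀ w : W, ‖w‖ ≤ R → ‖iteratedFDeriv ℝ j g w‖ ≤ B)
    {x : X} (hx : ‖x‖ ≤ R) :
    ‖iteratedFDeriv ℝ k (diffQuotient g P Q β) x‖ ≤ (R + k) * B := by
  induction k generalizing E with
  | zero =>
    rw [norm_iteratedFDeriv_zero, CharP.cast_eq_zero, add_zero]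
    refine norm_diffQuotient_le (hg.differentiable one_ne_zero) hβ hP hQ hL (fun w hw => ?_) hx
    simpa [norm_iteratedFDeriv_one] using hB 1 le_rfl le_rfl w hw
  | succ k ih =>
    set L := P - β⁻¹ • Q
    have hg' : ContDiff ℝ (k + 1 : ℕ) (fderiv ℝ g) := hg.fderiv_right (by norm_cast)
    have hB' : ∀ j, 1 ≤ j → j ≤ k + 1 → ∀ w : W, ‖w‖ ≤ R →
        ‖iteratedFDeriv ℝ j (fderiv ℝ g) w‖ ≤ B := fun j _ hj w hw => by
      rw [norm_iteratedFDeriv_fderiv]; exact hB (j + 1) (by omega) (by omega) w hw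
    have hLx : ‖L x‖ ≤ R := (L.le_of_opNorm_le hL x).trans (by linarith)
    have hk : ((k : ℕ) : WithTop ℕ∞) ≤ (k + 1 : ℕ) := by norm_cast; omega
    have hdq : ContDiff ℝ k (diffQuotient (fderiv ℝ g) P Q β) :=
      (((hg'.comp P.contDiff).sub (hg'.comp L.contDiff)).const_smul β).of_le hk
    have hgL : ContDiff ℝ k (fderiv ℝ g ∘ L) := (hg'.comp L.contDiff).of_le hk
    have hmain : ‖iteratedFDeriv ℝ k
        ((compL ℝ X W E).flip P ∘ diffQuotient (fderiv ℝ g) P Q β) x‖ ≤ (R + k) * B :=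
      calc _ ≤ ‖(compL ℝ X W E).flip P‖ *
              ‖iteratedFDeriv ℝ k (diffQuotient (fderiv ℝ g) P Q β) x‖ :=
            norm_iteratedFDeriv_comp_left _ hdq.contDiffAt le_rfl
        _ ≤ 1 * ((R + k) * B) := by
            gcongr
            · exact (norm_flip_compL_apply_le P).trans hP
            · exact ih hg' hB'
        _ = (R + k) * B := one_mul _
    have hrest : ‖iteratedFDeriv ℝ k ((compL ℝ X W E).flip Q ∘ fderiv ℝ g ∘ L) x‖ ≤ B :=
      calc _ ≤ ‖(compL ℝ X W E).flip Q‖ * ‖iteratedFDeriv ℝ k (fderiv ℝ g ∘ L) x‖ :=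
            norm_iteratedFDeriv_comp_left _ hgL.contDiffAt le_rfl
        _ ≤ 1 * (‖iteratedFDeriv ℝ k (fderiv ℝ g) (L x)‖ * 1 ^ k) := by
            gcongr
            · exact (norm_flip_compL_apply_le Q).trans hQ
            · exact (norm_iteratedFDeriv_comp_right_le hg' L x hk).trans (by gcongr)
        _ ≤ B := by
            rw [one_mul, one_pow, mul_one, norm_iteratedFDeriv_fderiv]
            exact hB (k + 1) (by omega) (by omega) _ hLx
    rw [← norm_iteratedFDeriv_fderiv, fderiv_diffQuotient (hg.differentiable (by simp)) P Q hβ.ne',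
      iteratedFDeriv_add_apply (((compL ℝ X W E).flip P).contDiff.comp hdq).contDiffAt
        (((compL ℝ X W E).flip Q).contDiff.comp hgL).contDiffAt]
    calc _ ≤ (R + k) * B + B := (norm_add_le _ _).trans (add_le_add hmain hrest)
      _ = (R + (k + 1 : ℕ)) * B := by push_cast; ring

end DiffQuotientBound

section Mbound

variable {W : Type u} {F : Type v} [NormedAddCommGroup W] [NormedSpace ℝ W]
  [NormedAddCommGroup F] [NormedSpace ℝ F] {f : W → F} {m : ℕ} {R : ℝ}

lemma le_Mbound (h : ∀ j ≤ m, ∃ B : ℝ, ∀ x : W, ‖x‖ ≤ R → ‖iteratedFDeriv ℝ j f x‖ ≤ B)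
    {j : ℕ} (hj : j ≤ m) {x : W} (hx : ‖x‖ ≤ R) : ‖iteratedFDeriv ℝ j f x‖ ≤ Mbound f m R := by
  refine le_csSup ?_ ⟨j, hj, x, hx, rfl⟩
  have hfin : BddAbove (⋃ i ∈ Set.Iic m, {a | ∃ x : W, ‖x‖ ≤ R ∧ a = ‖iteratedFDeriv ℝ i f x‖}) :=
    (Set.finite_Iic m).bddAbove_biUnion.2 fun i hi => by
      obtain ⟨B, hB⟩ := h i hi
      exact ⟨B, by rintro _ ⟨x, hx, rfl⟩; exact hB x hx⟩
  refine hfin.mono ?_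
  rintro _ ⟨i, hi, x, hx, rfl⟩
  exact Set.mem_biUnion (Set.mem_Iic.2 hi) ⟨x, hx, rfl⟩

lemma Mbound_nonneg (h : ∀ j ≤ m, ∃ B : ℝ, ∀ x : W, ‖x‖ ≤ R → ‖iteratedFDeriv ℝ j f x‖ ≤ B)
    (hR : 0 ≤ R) : 0 ≤ Mbound f m R :=
  (norm_nonneg _).trans (le_Mbound h (Nat.zero_le m) (x := 0) (by simpa using hR))

end Mbound

section WithLp

variable {W : Type*} [NormedAddCommGroup W] [NormedSpace ℝ W]

lemma WithLp.norm_fstL_le (p : ENNReal) [Fact (1 ≤ p)] : ‖WithLp.fstL p ℝ W W‖ ≤ 1 :=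
  opNorm_le_bound _ zero_le_one fun x => by simpa using WithLp.norm_fst_le W x

lemma WithLp.norm_sndL_le (p : ENNReal) [Fact (1 ≤ p)] : ‖WithLp.sndL p ℝ W W‖ ≤ 1 :=
  opNorm_le_bound _ zero_le_one fun x => by simpa using WithLp.norm_snd_le W x

lemma WithLp.norm_fstL_sub_smul_sndL_le {c : ℝ} (hc : |c| ≤ 1) :
    ‖WithLp.fstL 1 ℝ W W - c • WithLp.sndL 1 ℝ W W‖ ≤ 1 :=
  opNorm_le_bound _ zero_le_one fun x => by
    rw [one_mul, WithLp.prod_norm_eq_of_L1]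
    calc ‖x.fst - c • x.snd‖ ≤ ‖x.fst‖ + |c| * ‖x.snd‖ := by
          simpa [norm_smul] using norm_sub_le x.fst (c • x.snd)
      _ ≤ ‖x.fst‖ + ‖x.snd‖ := by gcongr; exact mul_le_of_le_one_left (norm_nonneg _) hc

end WithLp

lemma Psi_eq_diffQuotient {V : Type u} {W : Type v} [NormedAddCommGroup V] [NormedSpace ℝ V]
    [NormedAddCommGroup W] [NormedSpace ℝ W] (f : W → V →L[ℝ] W) (β : ℝ) :
    Psi f β = diffQuotient f (WithLp.fstL 1 ℝ W W) (WithLp.sndL 1 ℝ W W) β :=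
  rfl

lemma norm_iteratedFDeriv_Psi_le {V : Type u} {W : Type v} [NormedAddCommGroup V]
    [NormedSpace ℝ V] [NormedAddCommGroup W] [NormedSpace ℝ W] {f : W → V →L[ℝ] W} {k : ℕ}
    (hf : ContDiff ℝ (k + 1 : ℕ) f) {R : ℝ}
    (hbdd : ∀ j ≤ k + 1, ∃ B : ℝ, ∀ x : W, ‖x‖ ≤ R → ‖iteratedFDeriv ℝ j f x‖ ≤ B)
    {β : ℝ} (hβ : 1 ≤ β) {x : WithLp 1 (W × W)} (hx : ‖x‖ ≤ R) :
    ‖iteratedFDeriv ℝ k (Psi f β) x‖ ≤ (R + k) * Mbound f (k + 1) R := by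
  have hβinv : |β⁻¹| ≤ 1 := by
    rw [abs_inv, abs_of_pos (by linarith)]; exact inv_le_one_of_one_le₀ hβ
  rw [Psi_eq_diffQuotient]
  exact norm_iteratedFDeriv_diffQuotient_le k hf (by linarith) (WithLp.norm_fstL_le 1)
    (WithLp.norm_sndL_le 1) (WithLp.norm_fstL_sub_smul_sndL_le hβinv)
    (fun j _ hj _ hw => le_Mbound hbdd hj hw) hx

theorem statement11_general (V : Type u) (W : Type v)
    [NormedAddCommGroup V] [NormedSpace ℝ V]
    [NormedAddCommGroup W] [NormedSpace ℝ W]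
    (n : ℕ) (f : W → V →L[ℝ] W)
    (hf : ContDiff ℝ (n + 1 : ℕ) f)
    (hbdd : ∀ j ≤ n + 1, ∀ R > (0 : ℝ), ∃ B : ℝ, ∀ x : W, ‖x‖ ≤ R →
      ‖iteratedFDeriv ℝ j f x‖ ≤ B) :
    -- (i)
    (∀ β : ℝ, 1 ≤ β → ∀ R > (0 : ℝ), ∀ y z : W, ‖y‖ + ‖z‖ ≤ R →
      ‖Psi f β ((WithLp.equiv 1 (W × W)).symm (y, z))‖ ≤ (1 + R) * Mbound f 1 R) ∧
    -- (ii)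
    (∀ k : ℕ, 1 ≤ k → k ≤ n →
      ∃ c : ℝ, 0 < c ∧ ∀ β : ℝ, 1 ≤ β → ∀ R > (0 : ℝ),
        ∀ x : WithLp 1 (W × W), ‖x‖ ≤ R →
          ‖iteratedFDeriv ℝ k (Psi f β) x‖ ≤ c * (1 + R) * Mbound f (k + 1) R) := by
  have hbdd' {k : ℕ} (hk : k ≤ n) {R : ℝ} (hR : 0 < R) : ∀ j ≤ k + 1, ∃ B : ℝ, ∀ x : W,
      ‖x‖ ≤ R → ‖iteratedFDeriv ℝ j f x‖ ≤ B := fun j hj => hbdd j (by omega) R hR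
  have hf' {k : ℕ} (hk : k ≤ n) : ContDiff ℝ (k + 1 : ℕ) f := hf.of_le (by norm_cast; omega)
  refine ⟨fun β hβ R hR y z hyz => ?_, fun k hk hkn => ⟨k, by exact_mod_cast hk, ?_⟩⟩
  · have hM := Mbound_nonneg (hbdd' n.zero_le hR) hR.le
    have h := norm_iteratedFDeriv_Psi_le (hf' n.zero_le) (hbdd' n.zero_le hR) hβ
      (x := (WithLp.equiv 1 (W × W)).symm (y, z)) (by simpa [WithLp.prod_norm_eq_of_L1] using hyz)
    rw [norm_iteratedFDeriv_zero, Nat.cast_zero, add_zero] at h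
    exact h.trans (mul_le_mul_of_nonneg_right (by linarith) hM)
  · intro β hβ R hR x hx
    have hM := Mbound_nonneg (hbdd' hkn hR) hR.le
    have hk' : (1 : ℝ) ≤ k := by exact_mod_cast hk
    calc _ ≤ (R + k) * Mbound f (k + 1) R :=
          norm_iteratedFDeriv_Psi_le (hf' hkn) (hbdd' hkn hR) hβ hx
      _ ≤ k * (1 + R) * Mbound f (k + 1) R := by gcongr; nlinarith

/-- Bounds for `Ψ_β` and its Fréchet derivatives, uniformly in `β ≥ 1`. -/
theorem statement11 (V : Type u) (W : Type v)
    [NormedAddCommGroup V] [NormedSpace ℝ V] [CompleteSpace V]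
    [NormedAddCommGroup W] [NormedSpace ℝ W] [CompleteSpace W]
    (n : ℕ) (hn : 1 ≤ n) (f : W → V →L[ℝ] W)
    (hf : ContDiff ℝ (n + 1 : ℕ) f)
    (hbdd : ∀ j ≤ n + 1, ∀ R > (0 : ℝ), ∃ B : ℝ, ∀ x : W, ‖x‖ ≤ R →
      ‖iteratedFDeriv ℝ j f x‖ ≤ B) :
    -- (i)
    (∀ β : ℝ, 1 ≤ β → ∀ R > (0 : ℝ), ∀ y z : W, ‖y‖ + ‖z‖ ≤ R →
      ‖Psi f β ((WithLp.equiv 1 (W × W)).symm (y, z))‖ ≤ (1 + R) * Mbound f 1 R) ∧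
    -- (ii)
    (∀ k : ℕ, 1 ≤ k → k ≤ n →
      ∃ c : ℝ, 0 < c ∧ ∀ β : ℝ, 1 ≤ β → ∀ R > (0 : ℝ),
        ∀ x : WithLp 1 (W × W), ‖x‖ ≤ R →
          ‖iteratedFDeriv ℝ k (Psi f β) x‖ ≤ c * (1 + R) * Mbound f (k + 1) R) :=
  statement11_general V W n f hf hbdd
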